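/- arXiv:2210.03586 — 2 statements merged into one kernel-verified Lean document; each statement's English description precedes it below -/
import Mathlib

section
/- (Proposition 1, construction of minimizers, Ã ⊆ 𝔸.) Let m > 0, let U ∈ ℝ^{d×d} satisfy U Uᵀ = I, let V ∈ ℝ^{m×d} satisfy Vᵀ V = I, and set N := √m · (U Vᵀ), so (1/m) N Nᵀ = I. Let σ : {1,…,d} → ℝ satisfy σᵢ > 0 for all i, and set Z := U · diag(σ₁,…,σ_d) · Vᵀ. Then Σ := (1/m) Z Zᵀ is symmetric positive definite, and the ZCA-whitened output satisfies Σ^{−1/2} Z = N; consequently Z attains the minimum value 0 of the ZCA-based whitening loss ‖Σ^{−1/2} Z − N‖_F² with target N. -/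
/-! Since `Z = U diag(σ) Vᵀ` is a singular value decomposition, everything is diagonalised by the
orthogonal `U`: the covariance is `U diag(σ²/m) Uᵀ`, its positive semidefinite square root
is `U diag(σ/√m) Uᵀ` by uniqueness of that root, and its inverse `U diag(√m/σ) Uᵀ` maps `Z`
to `U diag(√m) Vᵀ = N`, the singular values cancelling. -/

open Matrix

/-- The covariance matrix `(1/m) • Z * Zᵀ` of a mini-batch `Z` is positive semidefinite. -/
lemma cov_posSemidef {d m : ℕ} (Z : Matrix (Fin d) (Fin m) ℝ) :
    (((m : ℝ)⁻¹) • (Z * Zᵀ)).PosSemidef := by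
  have key : ((m : ℝ)⁻¹) • (Z * Zᵀ)
      = ((Real.sqrt m)⁻¹ • Zᵀ)ᴴ * ((Real.sqrt m)⁻¹ • Zᵀ) := by
    rw [conjTranspose_smul, conjTranspose_eq_transpose_of_trivial, transpose_transpose,
      Matrix.smul_mul, Matrix.mul_smul, smul_smul]
    congr 1
    rw [star_trivial, ← mul_inv, Real.mul_self_sqrt (Nat.cast_nonneg m)]
  rw [key]
  exact posSemidef_conjTranspose_mul_self _

/-- The positive semidefinite square root of a positive semidefinite matrix (the definition
`Matrix.PosSemidef.sqrt` of the older Mathlib, removed since). -/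
noncomputable def Matrix.PosSemidef.sqrt {n 𝕜 : Type*} [Fintype n] [DecidableEq n] [RCLike 𝕜]
    [PartialOrder 𝕜] [StarOrderedRing 𝕜]
    {A : Matrix n n 𝕜} (hA : A.PosSemidef) : Matrix n n 𝕜 :=
  (hA.1.eigenvectorUnitary : Matrix n n 𝕜) *
    diagonal ((↑) ∘ (Real.sqrt ·) ∘ hA.1.eigenvalues) *
    (star (hA.1.eigenvectorUnitary : Matrix n n 𝕜))

/-- ZCA whitening: `Z ↦ ((1/m) Z Zᵀ)^(-1/2) * Z`, where the inverse square root is the matrix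
inverse of the unique positive semidefinite square root of the covariance matrix. -/
noncomputable def zcaWhiten {d m : ℕ} (Z : Matrix (Fin d) (Fin m) ℝ) :
    Matrix (Fin d) (Fin m) ℝ :=
  ((cov_posSemidef Z).sqrt)⁻¹ * Z

/-- Squared Frobenius norm. -/
def frobSq {ι κ : Type*} [Fintype ι] [Fintype κ] (A : Matrix ι κ ℝ) : ℝ :=
  ∑ i, ∑ j, (A i j) ^ 2

open scoped MatrixOrder ComplexOrder in
theorem Matrix.PosSemidef.sqrt_eq_of_mul_self_eq {n 𝕜 : Type*} [Fintype n] [DecidableEq n]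
    [RCLike 𝕜] {A S : Matrix n n 𝕜} (hA : A.PosSemidef) (hS : S.PosSemidef) (h : S * S = A) :
    hA.sqrt = S := by
  have hcfc : hA.sqrt = hA.1.cfc Real.sqrt := by
    simp only [Matrix.PosSemidef.sqrt, IsHermitian.cfc, Unitary.conjStarAlgAut_apply]
  rw [hcfc, ← hA.1.cfc_eq, ← cfcₙ_eq_cfc (hf0 := Real.sqrt_zero),
    ← CFC.sqrt_eq_real_sqrt _ hA.nonneg]
  exact CFC.sqrt_unique h hS.nonneg

namespace Matrix

section CommRing

variable {R ι κ α β : Type*} [CommRing R] [Fintype ι] [DecidableEq ι] [Fintype κ]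

theorem mul_diagonal_mul_transpose_mul_mul_diagonal_mul {V : Matrix κ ι R} (hV : Vᵀ * V = 1)
    (A : Matrix α ι R) (B : Matrix ι β R) (f g : ι → R) :
    A * diagonal f * Vᵀ * (V * diagonal g * B) = A * diagonal (f * g) * B := by
  rw [Matrix.mul_assoc, Matrix.mul_assoc V, ← Matrix.mul_assoc Vᵀ, hV, Matrix.one_mul,
    Matrix.mul_assoc A, ← Matrix.mul_assoc (diagonal f), diagonal_mul_diagonal,
    ← Matrix.mul_assoc]
  rfl

theorem mul_diagonal_mul_transpose_mul_self {V : Matrix κ ι R} (hV : Vᵀ * V = 1)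
    (U : Matrix α ι R) (σ : ι → R) :
    U * diagonal σ * Vᵀ * (U * diagonal σ * Vᵀ)ᵀ = U * diagonal (σ * σ) * Uᵀ := by
  rw [transpose_mul, transpose_mul, transpose_transpose, diagonal_transpose,
    ← Matrix.mul_assoc V, mul_diagonal_mul_transpose_mul_mul_diagonal_mul hV]

end CommRing

section Field

variable {K ι : Type*} [Field K] [Fintype ι] [DecidableEq ι]

theorem inv_mul_diagonal_mul_transpose {U : Matrix ι ι K} (hU : U * Uᵀ = 1) {f : ι → K}
    (hf : ∀ i, f i ≠ 0) : (U * diagonal f * Uᵀ)⁻¹ = U * diagonal f⁻¹ * Uᵀ := by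
  refine inv_eq_right_inv ?_
  have hff : f * f⁻¹ = fun _ ↦ 1 := funext fun i ↦ mul_inv_cancel₀ (hf i)
  rw [mul_diagonal_mul_transpose_mul_mul_diagonal_mul (mul_eq_one_comm.mp hU), hff,
    diagonal_one, Matrix.mul_one, hU]

end Field

theorem posDef_mul_diagonal_mul_transpose {ι : Type*} [Fintype ι] [DecidableEq ι]
    {U : Matrix ι ι ℝ} (hU : U * Uᵀ = 1) {f : ι → ℝ} (hf : ∀ i, 0 < f i) :
    (U * diagonal f * Uᵀ).PosDef := by
  simpa using (posDef_diagonal_iff.mpr hf).mul_mul_conjTranspose_same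
    (vecMul_injective_iff_isUnit.mpr (IsUnit.of_mul_eq_one Uᵀ hU))

end Matrix

theorem cov_mul_diagonal_mul_transpose {d m : ℕ} {V : Matrix (Fin m) (Fin d) ℝ}
    (hV : Vᵀ * V = 1) (U : Matrix (Fin d) (Fin d) ℝ) (σ : Fin d → ℝ) :
    (m : ℝ)⁻¹ • (U * diagonal σ * Vᵀ * (U * diagonal σ * Vᵀ)ᵀ)
      = U * diagonal ((√m)⁻¹ • σ * (√m)⁻¹ • σ) * Uᵀ := by
  rw [mul_diagonal_mul_transpose_mul_self hV, smul_mul_smul_comm, ← mul_inv,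
    Real.mul_self_sqrt m.cast_nonneg, diagonal_smul, Matrix.mul_smul, Matrix.smul_mul]

theorem zcaWhiten_mul_diagonal_mul_transpose {d m : ℕ} (hm : 0 < m)
    {U : Matrix (Fin d) (Fin d) ℝ} (hU : U * Uᵀ = 1) {V : Matrix (Fin m) (Fin d) ℝ}
    (hV : Vᵀ * V = 1) {σ : Fin d → ℝ} (hσ : ∀ i, 0 < σ i) :
    zcaWhiten (U * diagonal σ * Vᵀ) = √m • (U * Vᵀ) := by
  have hsqrt_m : 0 < √(m : ℝ) := Real.sqrt_pos.mpr (Nat.cast_pos.mpr hm)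
  set τ := (√m)⁻¹ • σ
  have hτ : ∀ i, 0 < τ i := fun i ↦ mul_pos (inv_pos.mpr hsqrt_m) (hσ i)
  have hsqrt : (cov_posSemidef (U * diagonal σ * Vᵀ)).sqrt = U * diagonal τ * Uᵀ := by
    refine (cov_posSemidef _).sqrt_eq_of_mul_self_eq
      (posDef_mul_diagonal_mul_transpose hU hτ).posSemidef ?_
    rw [mul_diagonal_mul_transpose_mul_mul_diagonal_mul (mul_eq_one_comm.mp hU),
      cov_mul_diagonal_mul_transpose hV]
  have hτσ : τ⁻¹ * σ = fun _ ↦ √m := funext fun i ↦ by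
    simp [τ, mul_comm, (hσ i).ne']
  rw [zcaWhiten, hsqrt, inv_mul_diagonal_mul_transpose hU fun i ↦ (hτ i).ne',
    mul_diagonal_mul_transpose_mul_mul_diagonal_mul (mul_eq_one_comm.mp hU), hτσ,
    ← smul_one_eq_diagonal, Matrix.mul_smul, Matrix.mul_one, Matrix.smul_mul]

/-- Proposition 1 (construction of minimizers, `Ã ⊆ 𝔸`): for orthogonal `U`, semi-orthogonal
`V`, the whitened target `N = √m • (U Vᵀ)`, and any positive `σᵢ`, the matrix
`Z = U diag(σ) Vᵀ` has positive definite covariance, its ZCA-whitened output equals `N`, and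
hence `Z` attains the minimum value `0` of the ZCA-based whitening loss with target `N`. -/
theorem constructed_minimizers {d m : ℕ} (hm : 0 < m)
    (U : Matrix (Fin d) (Fin d) ℝ) (hU : U * Uᵀ = 1)
    (V : Matrix (Fin m) (Fin d) ℝ) (hV : Vᵀ * V = 1)
    (σ : Fin d → ℝ) (hσ : ∀ i, 0 < σ i)
    (N : Matrix (Fin d) (Fin m) ℝ) (hNdef : N = Real.sqrt m • (U * Vᵀ))
    (Z : Matrix (Fin d) (Fin m) ℝ) (hZdef : Z = U * Matrix.diagonal σ * Vᵀ) :
    ((m : ℝ)⁻¹) • (N * Nᵀ) = (1 : Matrix (Fin d) (Fin d) ℝ) ∧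
    (((m : ℝ)⁻¹) • (Z * Zᵀ)).PosDef ∧
    zcaWhiten Z = N ∧
    frobSq (zcaWhiten Z - N) = 0 ∧
    ∀ Z' : Matrix (Fin d) (Fin m) ℝ, 0 ≤ frobSq (zcaWhiten Z' - N) := by
  have hsqrt_m : 0 < √(m : ℝ) := Real.sqrt_pos.mpr (Nat.cast_pos.mpr hm)
  have hwhiten : zcaWhiten Z = N := by
    rw [hZdef, hNdef, zcaWhiten_mul_diagonal_mul_transpose hm hU hV hσ]
  have hNN : N * Nᵀ = (m : ℝ) • 1 := by
    rw [hNdef, transpose_smul, Matrix.smul_mul, Matrix.mul_smul, smul_smul,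
      Real.mul_self_sqrt m.cast_nonneg, transpose_mul, transpose_transpose, Matrix.mul_assoc,
      ← Matrix.mul_assoc Vᵀ, hV, Matrix.one_mul, hU]
  refine ⟨?_, ?_, hwhiten, ?_, fun Z' ↦ ?_⟩
  · rw [hNN, smul_smul, inv_mul_cancel₀ (Nat.cast_ne_zero.mpr hm.ne'), one_smul]
  · rw [hZdef, cov_mul_diagonal_mul_transpose hV]
    exact posDef_mul_diagonal_mul_transpose hU fun i ↦
      mul_self_pos.mpr (mul_pos (inv_pos.mpr hsqrt_m) (hσ i)).ne'
  · simp [hwhiten, frobSq]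
  · unfold frobSq
    positivity
end

section
/- (Full-rank does not imply whitened: BW-based whitening loss imposes only a full-rank constraint.) Let m > 0, let U ∈ ℝ^{d×d} satisfy U Uᵀ = I, let V ∈ ℝ^{m×d} satisfy Vᵀ V = I, let σ : {1,…,d} → ℝ satisfy σᵢ > 0 for all i, and set Z := U · diag(σ₁,…,σ_d) · Vᵀ. Then the covariance of Z satisfies (1/m) Z Zᵀ = U · diag(σ₁²/m,…,σ_d²/m) · Uᵀ; and if the σᵢ are not all equal to √m, then (1/m) Z Zᵀ ≠ I, i.e., Z attains zero ZCA-whitening loss against the whitened target N = √m · (U Vᵀ) without itself being whitened. -/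
/-!
Since `Vᵀ V = I`, the factor `V` cancels from `Z Zᵀ = U diag(σ) Vᵀ V diag(σ) Uᵀ`, leaving
`U diag(σ²) Uᵀ`. Conjugation by the orthogonal `U` is injective, so `(1/m) Z Zᵀ = I` would force
`σᵢ² / m = 1`, i.e. `σᵢ = √m` for the positive `σᵢ`.
-/

open Matrix

namespace Matrix

variable {l n o R : Type*} [Fintype n] [Fintype o] [DecidableEq n]

theorem mul_diagonal_mul_transpose_mul_self_transpose [CommSemiring R]
    (U : Matrix l n R) (σ : n → R) {V : Matrix o n R} (hV : Vᵀ * V = 1) :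
    U * diagonal σ * Vᵀ * (U * diagonal σ * Vᵀ)ᵀ = U * diagonal (σ ^ 2) * Uᵀ := by
  calc U * diagonal σ * Vᵀ * (U * diagonal σ * Vᵀ)ᵀ
      = U * (diagonal σ * (Vᵀ * V) * diagonal σ) * Uᵀ := by
        simp only [transpose_mul, transpose_transpose, diagonal_transpose, Matrix.mul_assoc]
    _ = U * diagonal (σ ^ 2) * Uᵀ := by
        rw [hV, Matrix.mul_one, diagonal_mul_diagonal, sq]
        rfl

theorem eq_one_of_mul_mul_transpose_eq_one [CommRing R] {U A : Matrix n n R}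
    (hU : U * Uᵀ = 1) (h : U * A * Uᵀ = 1) : A = 1 := by
  have hUU : Uᵀ * U = 1 := mul_eq_one_comm.mp hU
  calc A = Uᵀ * U * A * (Uᵀ * U) := by rw [hUU, Matrix.one_mul, Matrix.mul_one]
    _ = Uᵀ * (U * A * Uᵀ) * U := by simp only [Matrix.mul_assoc]
    _ = 1 := by rw [h, Matrix.mul_one, hUU]

end Matrix

theorem fullRank_not_whitened_general {d m : ℕ}
    (U : Matrix (Fin d) (Fin d) ℝ) (hU : U * Uᵀ = 1)
    (V : Matrix (Fin m) (Fin d) ℝ) (hV : Vᵀ * V = 1)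
    (σ : Fin d → ℝ) (hσ : ∀ i, 0 < σ i)
    (Z : Matrix (Fin d) (Fin m) ℝ) (hZdef : Z = U * Matrix.diagonal σ * Vᵀ) :
    ((m : ℝ)⁻¹) • (Z * Zᵀ) = U * Matrix.diagonal (fun i => σ i ^ 2 / m) * Uᵀ ∧
    ((∃ i, σ i ≠ Real.sqrt m) →
      ((m : ℝ)⁻¹) • (Z * Zᵀ) ≠ (1 : Matrix (Fin d) (Fin d) ℝ)) := by
  have hcov : ((m : ℝ)⁻¹) • (Z * Zᵀ) = U * diagonal (fun i => σ i ^ 2 / m) * Uᵀ := by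
    have hdiag : diagonal (fun i => σ i ^ 2 / m) = ((m : ℝ)⁻¹) • diagonal (σ ^ 2) := by
      rw [← diagonal_smul]
      congr 1
      ext i
      simp [div_eq_inv_mul]
    rw [hZdef, mul_diagonal_mul_transpose_mul_self_transpose U σ hV, hdiag,
      Matrix.mul_smul, Matrix.smul_mul]
  refine ⟨hcov, fun ⟨i, hi⟩ hwhite => hi ?_⟩
  have hdiag : diagonal (fun i => σ i ^ 2 / m) = diagonal fun _ => 1 :=
    (eq_one_of_mul_mul_transpose_eq_one hU (hcov ▸ hwhite)).trans diagonal_one.symm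
  have hσi : σ i ^ 2 = m := eq_of_div_eq_one (congrFun (diagonal_injective hdiag) i)
  rw [← hσi, Real.sqrt_sq (hσ i).le]

/-- Full-rank does not imply whitened: for `Z = U diag(σ) Vᵀ` with orthogonal `U`,
semi-orthogonal `V` and positive `σᵢ`, the covariance of `Z` is
`(1/m) Z Zᵀ = U diag(σᵢ²/m) Uᵀ`; and if the `σᵢ` are not all equal to `√m`, then
`(1/m) Z Zᵀ ≠ I`, i.e. `Z` attains zero ZCA-whitening loss against the whitened target
`√m • (U Vᵀ)` without itself being whitened. -/
theorem fullRank_not_whitened {d m : ℕ} (hm : 0 < m)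
    (U : Matrix (Fin d) (Fin d) ℝ) (hU : U * Uᵀ = 1)
    (V : Matrix (Fin m) (Fin d) ℝ) (hV : Vᵀ * V = 1)
    (σ : Fin d → ℝ) (hσ : ∀ i, 0 < σ i)
    (Z : Matrix (Fin d) (Fin m) ℝ) (hZdef : Z = U * Matrix.diagonal σ * Vᵀ) :
    ((m : ℝ)⁻¹) • (Z * Zᵀ) = U * Matrix.diagonal (fun i => σ i ^ 2 / m) * Uᵀ ∧
    ((∃ i, σ i ≠ Real.sqrt m) →
      ((m : ℝ)⁻¹) • (Z * Zᵀ) ≠ (1 : Matrix (Fin d) (Fin d) ℝ)) :=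
  fullRank_not_whitened_general U hU V hV σ hσ Z hZdef
end
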